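/- arXiv:2602.03535 — 6 statements merged into one kernel-verified Lean document; each statement's English description precedes it below -/
import Mathlib

section
/- With the separable group regularizer J and restriction/prolongation operators R, P = Rᵀ as above, suppose θ ∈ dom(∂J), v ∈ ∂J_δ(θ), θ̂ ∈ dom(∂Ĵ), and v̂ ∈ ∂Ĵ_δ(θ̂). Define θ̃ := θ + P(θ̂ - Rθ) and ṽ := v + P(v̂ - Rv). Then ṽ ∈ ∂J_δ(θ̃). -/
open RealInnerProductSpace Finset

/-!
Up to the constant `1/(2δ)`, `‖x‖²` is the sum of the `‖x_g‖²`, so `J_δ` and `Ĵ_δ` are sums of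
functions of one group each, and a vector is a subgradient of such a sum exactly when each of
its group components is a subgradient of the corresponding summand. On a selected group,
`(θ̃, ṽ)` has the components of `(θ̂, v̂)`; on the others, those of `(θ, v)`.
-/

def subdifferential {E : Type*} [NormedAddCommGroup E] [InnerProductSpace ℝ E]
    (f : E → ℝ) (x : E) : Set E :=
  {v | ∀ y, f x + ⟪v, y - x⟫ ≤ f y}

section Separable

variable {ι : Type*} [Fintype ι] {β : ι → Type*} [∀ i, NormedAddCommGroup (β i)]

theorem PiLp.mul_norm_sq_add_sum_eq_sum (c : ℝ) (J : (i : ι) → β i → ℝ) (x : PiLp 2 β) :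
    c * ‖x‖ ^ 2 + ∑ i, J i (x i) = ∑ i, (c * ‖x i‖ ^ 2 + J i (x i)) := by
  rw [PiLp.norm_sq_eq_of_L2, mul_sum, sum_add_distrib]

variable [∀ i, InnerProductSpace ℝ (β i)]

theorem mem_subdifferential_iff_sum_nonneg (f : (i : ι) → β i → ℝ) (x v : PiLp 2 β) :
    v ∈ subdifferential (fun y : PiLp 2 β => ∑ i, f i (y i)) x ↔
      ∀ y : PiLp 2 β, 0 ≤ ∑ i, (f i (y i) - f i (x i) - ⟪v i, y i - x i⟫) := by
  refine forall_congr' fun y => ?_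
  simp only [PiLp.inner_apply, PiLp.sub_apply, sum_sub_distrib]
  constructor <;> intro h <;> linarith

theorem mem_subdifferential_piLp_iff [DecidableEq ι] (f : (i : ι) → β i → ℝ)
    (x v : PiLp 2 β) :
    v ∈ subdifferential (fun y : PiLp 2 β => ∑ i, f i (y i)) x ↔
      ∀ i, v i ∈ subdifferential (f i) (x i) := by
  rw [mem_subdifferential_iff_sum_nonneg]
  constructor
  · intro h i a
    have hi := h (WithLp.toLp 2 (Function.update x.ofLp i a))
    rw [sum_eq_single i (fun j _ hj => by simp [Function.update_of_ne hj])
      (fun hnot => (hnot (mem_univ i)).elim)] at hi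
    simp only [Function.update_self] at hi
    linarith
  · intro h y
    exact sum_nonneg fun i _ => by linarith [h i (y i)]

end Separable

theorem prolongated_subgradient_general {G : Type*} [Fintype G] [DecidableEq G]
    (dg : G → ℕ) (Jg : (g : G) → EuclideanSpace ℝ (Fin (dg g)) → ℝ)
    (δ : ℝ) (S : Finset G) :
    let E := PiLp 2 (fun g : G => EuclideanSpace ℝ (Fin (dg g)))
    let Ec := PiLp 2 (fun g : {g : G // g ∈ S} => EuclideanSpace ℝ (Fin (dg g.1)))
    let Jδ : E → ℝ := fun x => 1/(2*δ) * ‖x‖^2 + ∑ g, Jg g (x g)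
    let Jδc : Ec → ℝ := fun x => 1/(2*δ) * ‖x‖^2 + ∑ g : {g : G // g ∈ S}, Jg g.1 (x g)
    let Rop : E → Ec := fun x => WithLp.toLp 2 (fun g => x g.1)
    let Pop : Ec → E := fun x => WithLp.toLp 2 (fun g => if h : g ∈ S then x ⟨g, h⟩ else 0)
    ∀ (θ v : E) (θc vc : Ec),
      (∀ x : E, Jδ θ + ⟪v, x - θ⟫ ≤ Jδ x) →
      (∀ x : Ec, Jδc θc + ⟪vc, x - θc⟫ ≤ Jδc x) →
      ∀ x : E, Jδ (θ + Pop (θc - Rop θ)) + ⟪v + Pop (vc - Rop v), x - (θ + Pop (θc - Rop θ))⟫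
        ≤ Jδ x := by
  intro E Ec Jδ Jδc Rop Pop θ v θc vc hv hvc
  let f (g : G) (a : EuclideanSpace ℝ (Fin (dg g))) : ℝ := 1/(2*δ) * ‖a‖^2 + Jg g a
  have hJδ : Jδ = fun y => ∑ g, f g (y g) :=
    funext fun y => PiLp.mul_norm_sq_add_sum_eq_sum _ _ y
  have hJδc : Jδc = fun y => ∑ g : {g // g ∈ S}, f g.1 (y g) :=
    funext fun y => PiLp.mul_norm_sq_add_sum_eq_sum _ _ y
  change v ∈ subdifferential Jδ θ at hv
  change vc ∈ subdifferential Jδc θc at hvc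
  change v + Pop (vc - Rop v) ∈ subdifferential Jδ (θ + Pop (θc - Rop θ))
  rw [hJδ, mem_subdifferential_piLp_iff] at hv ⊢
  rw [hJδc, mem_subdifferential_piLp_iff] at hvc
  have hPop : ∀ (a : E) (b : Ec) (g : G),
      (a + Pop (b - Rop a)) g = if h : g ∈ S then b ⟨g, h⟩ else a g := by
    intro a b g
    change a g + (if h : g ∈ S then b ⟨g, h⟩ - a g else 0) = _
    split_ifs <;> simp
  intro g
  rw [hPop, hPop]
  by_cases hg : g ∈ S
  · simpa only [hg, dite_true] using hvc ⟨g, hg⟩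
  · simpa only [hg, dite_false] using hv g

/-- prolongating coarse subgradients. With `θ̃ := θ + P(θ̂ - Rθ)` and
`ṽ := v + P(v̂ - Rv)` built from subgradients `v ∈ ∂J_δ(θ)` and `v̂ ∈ ∂Ĵ_δ(θ̂)`, we have
`ṽ ∈ ∂J_δ(θ̃)`. -/
theorem prolongated_subgradient {G : Type*} [Fintype G] [DecidableEq G]
    (dg : G → ℕ) (Jg : (g : G) → EuclideanSpace ℝ (Fin (dg g)) → ℝ)
    (hconv : ∀ g, ConvexOn ℝ Set.univ (Jg g)) (hlsc : ∀ g, LowerSemicontinuous (Jg g))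
    (δ : ℝ) (hδ : 0 < δ) (S : Finset G) :
    let E := PiLp 2 (fun g : G => EuclideanSpace ℝ (Fin (dg g)))
    let Ec := PiLp 2 (fun g : {g : G // g ∈ S} => EuclideanSpace ℝ (Fin (dg g.1)))
    let Jδ : E → ℝ := fun x => 1/(2*δ) * ‖x‖^2 + ∑ g, Jg g (x g)
    let Jδc : Ec → ℝ := fun x => 1/(2*δ) * ‖x‖^2 + ∑ g : {g : G // g ∈ S}, Jg g.1 (x g)
    let Rop : E → Ec := fun x => WithLp.toLp 2 (fun g => x g.1)
    let Pop : Ec → E := fun x => WithLp.toLp 2 (fun g => if h : g ∈ S then x ⟨g, h⟩ else 0)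
    ∀ (θ v : E) (θc vc : Ec),
      (∀ x : E, Jδ θ + ⟪v, x - θ⟫ ≤ Jδ x) →
      (∀ x : Ec, Jδc θc + ⟪vc, x - θc⟫ ≤ Jδc x) →
      ∀ x : E, Jδ (θ + Pop (θc - Rop θ)) + ⟪v + Pop (vc - Rop v), x - (θ + Pop (θc - Rop θ))⟫
        ≤ Jδ x :=
  prolongated_subgradient_general dg Jg δ S
end

section
/- Let F: ℝ^d → ℝ be L-smooth relative to J_δ, i.e. F(θ') ≤ F(θ) + ⟨∇F(θ), θ' - θ⟩ + L·D_{J_δ}^v(θ', θ) for all θ' ∈ ℝ^d, θ ∈ dom(∂J), v ∈ ∂J_δ(θ). Fix θ^(k) ∈ dom(∂J) with v^(k) ∈ ∂J_δ(θ^(k)), let R select groups with P = Rᵀ, and define the coarse objective F̂(θ̂) := F(θ^(k) + P(θ̂ - Rθ^(k))). Then F̂ is L-smooth relative to the coarse regularizer Ĵ_δ. -/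
open RealInnerProductSpace Finset

/-! The lifted point `θk + P(θ̂ - Rθk)` coincides with `θ̂` on the selected groups and with `θk`
elsewhere. Since `J_δ` is separable, its subgradients are exactly the families of groupwise
subgradients, so gluing `v̂` on the selected groups to `vk` on the others gives a subgradient of
`J_δ` at the lifted point. Relative smoothness of `F` there applies, and because the two lifted
points differ only on the selected groups, the linear term and the Bregman divergence of `J_δ`
reduce groupwise to those of the coarse problem. -/

theorem Finset.sum_univ_eq_sum_subtype_of_eq_zero {ι M : Type*} [Fintype ι] [AddCommMonoid M]
    (S : Finset ι) (f : ι → M) (hf : ∀ i ∉ S, f i = 0) : ∑ i, f i = ∑ i : S, f i := by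
  rw [Finset.sum_coe_sort]
  exact (Finset.sum_subset (subset_univ S) fun i _ hi => hf i hi).symm

namespace PiLp

variable {ι : Type*} [Fintype ι] {E : ι → Type*} [∀ i, NormedAddCommGroup (E i)]

theorem mul_norm_sq_add_sum_eq_sum_s6 (c : ℝ) (f : ∀ i, E i → ℝ) (x : PiLp 2 E) :
    c * ‖x‖ ^ 2 + ∑ i, f i (x i) = ∑ i, (c * ‖x i‖ ^ 2 + f i (x i)) := by
  rw [norm_sq_eq_of_L2, Finset.mul_sum, ← Finset.sum_add_distrib]

variable [∀ i, InnerProductSpace ℝ (E i)]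

theorem inner_sub_eq_sum (w x θ : PiLp 2 E) : ⟪w, x - θ⟫ = ∑ i, ⟪w i, x i - θ i⟫ := by
  simp only [inner_apply, sub_apply]

theorem sum_sub_sum_sub_inner_eq_sum (φ : ∀ i, E i → ℝ) (v x θ : PiLp 2 E) :
    ∑ i, φ i (x i) - ∑ i, φ i (θ i) - ⟪v, x - θ⟫
      = ∑ i, (φ i (x i) - φ i (θ i) - ⟪v i, x i - θ i⟫) := by
  simp only [inner_sub_eq_sum, Finset.sum_sub_distrib]

theorem subgradient_sum_iff (φ : ∀ i, E i → ℝ) (θ v : PiLp 2 E) :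
    (∀ x : PiLp 2 E, ∑ i, φ i (θ i) + ⟪v, x - θ⟫ ≤ ∑ i, φ i (x i)) ↔
      ∀ i (y : E i), φ i (θ i) + ⟪v i, y - θ i⟫ ≤ φ i y := by
  have key : ∀ x : PiLp 2 E, ∑ i, φ i (θ i) + ⟪v, x - θ⟫ ≤ ∑ i, φ i (x i) ↔
      0 ≤ ∑ i, (φ i (x i) - φ i (θ i) - ⟪v i, x i - θ i⟫) := fun x => by
    rw [← sum_sub_sum_sub_inner_eq_sum]; constructor <;> intro h <;> linarith
  simp only [key]
  constructor
  · intro h i y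
    classical
    have := h (WithLp.toLp 2 (Function.update θ.ofLp i y))
    rw [Finset.sum_eq_single i (fun j _ hj => by simp [hj]) (by simp)] at this
    simp only [Function.update_self] at this
    linarith
  · exact fun h x => Finset.sum_nonneg fun i _ => by linarith [h i (x i)]

end PiLp

theorem coarse_objective_relatively_smooth_general {G : Type*} [Fintype G] [DecidableEq G]
    (dg : G → ℕ) (Jg : (g : G) → EuclideanSpace ℝ (Fin (dg g)) → ℝ)
    (δ L : ℝ) (S : Finset G) :
    let E := PiLp 2 (fun g : G => EuclideanSpace ℝ (Fin (dg g)))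
    let Ec := PiLp 2 (fun g : {g : G // g ∈ S} => EuclideanSpace ℝ (Fin (dg g.1)))
    let Jδ : E → ℝ := fun x => 1/(2*δ) * ‖x‖^2 + ∑ g, Jg g (x g)
    let Jδc : Ec → ℝ := fun x => 1/(2*δ) * ‖x‖^2 + ∑ g : {g : G // g ∈ S}, Jg g.1 (x g)
    let Rop : E → Ec := fun x => WithLp.toLp 2 (fun g => x g.1)
    let Pop : Ec → E := fun x => WithLp.toLp 2 (fun g => if h : g ∈ S then x ⟨g, h⟩ else 0)
    ∀ (F : E → ℝ) (gradF : E → E), (∀ x, HasGradientAt F (gradF x) x) →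
      -- `F` is `L`-smooth relative to `J_δ`:
      (∀ (θ' θ v : E), (∀ x : E, Jδ θ + ⟪v, x - θ⟫ ≤ Jδ x) →
        F θ' ≤ F θ + ⟪gradF θ, θ' - θ⟫ + L * (Jδ θ' - Jδ θ - ⟪v, θ' - θ⟫)) →
      ∀ (θk vk : E), (∀ x : E, Jδ θk + ⟪vk, x - θk⟫ ≤ Jδ x) →
      -- then `F̂` is `L`-smooth relative to `Ĵ_δ`:
      ∀ (θc' θc vc : Ec), (∀ x : Ec, Jδc θc + ⟪vc, x - θc⟫ ≤ Jδc x) →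
        F (θk + Pop (θc' - Rop θk)) ≤ F (θk + Pop (θc - Rop θk))
          + ⟪Rop (gradF (θk + Pop (θc - Rop θk))), θc' - θc⟫
          + L * (Jδc θc' - Jδc θc - ⟪vc, θc' - θc⟫) := by
  intro E Ec Jδ Jδc Rop Pop F gradF _ hsmooth θk vk hvk θc' θc vc hvc
  let φ := fun g (y : EuclideanSpace ℝ (Fin (dg g))) => 1/(2*δ) * ‖y‖^2 + Jg g y
  have hJδ (x : E) : Jδ x = ∑ g, φ g (x g) := PiLp.mul_norm_sq_add_sum_eq_sum_s6 _ _ x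
  have hJδc (x : Ec) : Jδc x = ∑ g, φ g.1 (x g) := PiLp.mul_norm_sq_add_sum_eq_sum_s6 _ _ x
  have hlift (z : Ec) (g : G) :
      (θk + Pop (z - Rop θk)) g = if h : g ∈ S then z ⟨g, h⟩ else θk g := by
    change θk g + (if h : g ∈ S then z ⟨g, h⟩ - θk g else 0) = _
    split_ifs <;> abel
  have hθ' := hlift θc'
  have hθ := hlift θc
  set θ' := θk + Pop (θc' - Rop θk)
  set θ := θk + Pop (θc - Rop θk)
  let v : E := WithLp.toLp 2 fun g => if h : g ∈ S then vc ⟨g, h⟩ else vk g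
  have hv : ∀ x : E, Jδ θ + ⟪v, x - θ⟫ ≤ Jδ x := by
    simp only [hJδ] at hvk ⊢
    simp only [hJδc] at hvc
    rw [PiLp.subgradient_sum_iff] at hvk hvc ⊢
    intro g y
    by_cases h : g ∈ S
    · simpa [hθ, v, h] using hvc ⟨g, h⟩ y
    · simpa [hθ, v, h] using hvk g y
  have hinner : ⟪gradF θ, θ' - θ⟫ = ⟪Rop (gradF θ), θc' - θc⟫ := by
    rw [PiLp.inner_sub_eq_sum, PiLp.inner_sub_eq_sum,
      Finset.sum_univ_eq_sum_subtype_of_eq_zero S _ fun g h => by simp [hθ, hθ', h]]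
    exact Finset.sum_congr rfl fun g _ => by simp [hθ, hθ', Rop]
  have hbregman : Jδ θ' - Jδ θ - ⟪v, θ' - θ⟫ = Jδc θc' - Jδc θc - ⟪vc, θc' - θc⟫ := by
    rw [hJδ, hJδ, hJδc, hJδc, PiLp.sum_sub_sum_sub_inner_eq_sum,
      PiLp.sum_sub_sum_sub_inner_eq_sum, Finset.sum_univ_eq_sum_subtype_of_eq_zero S _
        fun g h => by simp [hθ, hθ', h]]
    exact Finset.sum_congr rfl fun g _ => by simp [hθ, hθ', v]
  simpa only [hinner, hbregman] using hsmooth θ' θ v hv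

/-- if `F` is `L`-smooth relative to `J_δ`, then the coarse objective
`F̂(θ̂) := F(θ^(k) + P(θ̂ - Rθ^(k)))` is `L`-smooth relative to the coarse regularizer
`Ĵ_δ` (with gradient `∇F̂(θ̂) = R∇F(θ^(k) + P(θ̂ - Rθ^(k)))`). -/
theorem coarse_objective_relatively_smooth {G : Type*} [Fintype G] [DecidableEq G]
    (dg : G → ℕ) (Jg : (g : G) → EuclideanSpace ℝ (Fin (dg g)) → ℝ)
    (hconv : ∀ g, ConvexOn ℝ Set.univ (Jg g)) (hlsc : ∀ g, LowerSemicontinuous (Jg g))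
    (δ L : ℝ) (hδ : 0 < δ) (hL : 0 < L) (S : Finset G) :
    let E := PiLp 2 (fun g : G => EuclideanSpace ℝ (Fin (dg g)))
    let Ec := PiLp 2 (fun g : {g : G // g ∈ S} => EuclideanSpace ℝ (Fin (dg g.1)))
    let Jδ : E → ℝ := fun x => 1/(2*δ) * ‖x‖^2 + ∑ g, Jg g (x g)
    let Jδc : Ec → ℝ := fun x => 1/(2*δ) * ‖x‖^2 + ∑ g : {g : G // g ∈ S}, Jg g.1 (x g)
    let Rop : E → Ec := fun x => WithLp.toLp 2 (fun g => x g.1)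
    let Pop : Ec → E := fun x => WithLp.toLp 2 (fun g => if h : g ∈ S then x ⟨g, h⟩ else 0)
    ∀ (F : E → ℝ) (gradF : E → E), (∀ x, HasGradientAt F (gradF x) x) →
      -- `F` is `L`-smooth relative to `J_δ`:
      (∀ (θ' θ v : E), (∀ x : E, Jδ θ + ⟪v, x - θ⟫ ≤ Jδ x) →
        F θ' ≤ F θ + ⟪gradF θ, θ' - θ⟫ + L * (Jδ θ' - Jδ θ - ⟪v, θ' - θ⟫)) →
      ∀ (θk vk : E), (∀ x : E, Jδ θk + ⟪vk, x - θk⟫ ≤ Jδ x) →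
      -- then `F̂` is `L`-smooth relative to `Ĵ_δ`:
      ∀ (θc' θc vc : Ec), (∀ x : Ec, Jδc θc + ⟪vc, x - θc⟫ ≤ Jδc x) →
        F (θk + Pop (θc' - Rop θk)) ≤ F (θk + Pop (θc - Rop θk))
          + ⟪Rop (gradF (θk + Pop (θc - Rop θk))), θc' - θc⟫
          + L * (Jδc θc' - Jδc θc - ⟪vc, θc' - θc⟫) :=
  coarse_objective_relatively_smooth_general dg Jg δ L S
end

section
/- Let θ ∈ dom(∂J), v ∈ ∂J_δ(θ), τ > 0, and define the linearized Bregman step v_τ⁺ := v - τ∇F(θ), θ_τ⁺ := prox_{δJ}(δ v_τ⁺). Then v_τ⁺ ∈ ∂J_δ(θ_τ⁺), and consequently ⟨∇F(θ), θ_τ⁺ - θ⟩ = -(1/τ)⟨v - v_τ⁺, θ - θ_τ⁺⟩ = -(1/τ) D^sym_{J_δ}(θ_τ⁺, θ). -/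
open RealInnerProductSpace

/-- for the linearized Bregman step `v_τ⁺ := v - τ∇F(θ)`,
`θ_τ⁺ := prox_{δJ}(δ v_τ⁺)`, the new dual variable is a subgradient,
`v_τ⁺ ∈ ∂J_δ(θ_τ⁺)`, and
`⟨∇F(θ), θ_τ⁺ - θ⟩ = -(1/τ)⟨v - v_τ⁺, θ - θ_τ⁺⟩ = -(1/τ) D^sym(θ_τ⁺, θ)`. -/
theorem linBreg_step_subgradient_and_descent_identity {d : ℕ}
    (J F : EuclideanSpace ℝ (Fin d) → ℝ)
    (hconv : ConvexOn ℝ Set.univ J) (hlsc : LowerSemicontinuous J)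
    (δ τ : ℝ) (hδ : 0 < δ) (hτ : 0 < τ)
    (g θ v θτ : EuclideanSpace ℝ (Fin d))
    (hgrad : HasGradientAt F g θ)
    (hv : ∀ x, (1/(2*δ) * ‖θ‖^2 + J θ) + ⟪v, x - θ⟫ ≤ 1/(2*δ) * ‖x‖^2 + J x)
    (hmin : IsMinOn (fun x => 1/(2*δ) * ‖x - δ • (v - τ • g)‖^2 + J x) Set.univ θτ) :
    (∀ x, (1/(2*δ) * ‖θτ‖^2 + J θτ) + ⟪v - τ • g, x - θτ⟫ ≤ 1/(2*δ) * ‖x‖^2 + J x) ∧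
      ⟪g, θτ - θ⟫ = -(1/τ) * ⟪v - (v - τ • g), θ - θτ⟫ := by
  set w : EuclideanSpace ℝ (Fin d) := v - τ • g with hw
  have key : ∀ x : EuclideanSpace ℝ (Fin d),
      1/(2*δ) * ‖x - δ • w‖^2 = 1/(2*δ) * ‖x‖^2 - ⟪w, x⟫ + δ/2 * ‖w‖^2 := by
    intro x
    rw [norm_sub_sq_real, real_inner_smul_right, norm_smul, Real.norm_eq_abs,
      abs_of_pos hδ, mul_pow, real_inner_comm]
    field_simp
  constructor
  · intro x
    have h := hmin (Set.mem_univ x)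
    simp only [Set.mem_setOf_eq, key] at h
    have hsub : ⟪w, x - θτ⟫ = ⟪w, x⟫ - ⟪w, θτ⟫ := inner_sub_right w x θτ
    linarith
  · have h1 : v - (v - τ • g) = τ • g := by abel
    rw [h1, real_inner_smul_left, inner_sub_right, inner_sub_right]
    field_simp
    ring
end

section
/- Suppose F is L-smooth relative to J_δ and satisfies the generalized PL condition: there exist λ: (0,∞) → (0,∞) and η > 0 with D_{J_δ}^{v_τ⁺}(θ, θ_τ⁺) ≥ λ(τ) D_{J_δ}^{v_1⁺}(θ, θ_1⁺) and D_{J_δ}^{v_1⁺}(θ, θ_1⁺) ≥ η(F(θ) - F*) for all θ ∈ dom(∂J), v ∈ ∂J_δ(θ). Then for any step size 0 < τ < 1/L, one linearized Bregman step satisfies F(θ_τ⁺) - F* ≤ (1 - ηλ(τ)/τ)(F(θ) - F*). -/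
/-!
The two Bregman distances between `θ` and `θ_τ⁺` add up to `-τ ⟪∇F(θ), θ_τ⁺ - θ⟫`. Multiplying
relative smoothness by `τ` and absorbing `τ L D^v(θ_τ⁺, θ) ≤ D^v(θ_τ⁺, θ)` (as `τ L ≤ 1` and `v`
is a subgradient, so `D^v ≥ 0`) therefore gives
`τ F(θ_τ⁺) + D^{v_τ⁺}(θ, θ_τ⁺) ≤ τ F(θ)`, and the scaling and PL assumptions bound the Bregman
term below by `λ(τ) η (F(θ) - F*)`. These assumptions are evaluated at the full step `θ_1⁺`,
which exists because the proximal objective of a convex function on `ℝ^d` is coercive.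
-/

open RealInnerProductSpace Set Filter

section Coercivity

variable {E : Type*} [NormedAddCommGroup E] [NormedSpace ℝ E]

/-- The constant `2 / ρ` comes from comparing `f x` with `f` at the point `ρ / (2 ‖x‖) • x`
of the ball of radius `ρ` around `0` on which `f > f 0 - 1`. -/
theorem ConvexOn.exists_sub_mul_norm_le {f : E → ℝ} (hf : ConvexOn ℝ univ f)
    (hf0 : ContinuousAt f 0) : ∃ A C : ℝ, ∀ x, A - C * ‖x‖ ≤ f x := by
  obtain ⟨ρ, hρ, hball⟩ := Metric.continuousAt_iff.mp hf0 1 one_pos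
  have hnear : ∀ y : E, ‖y‖ < ρ → f 0 - 1 < f y := fun y hy => by
    have := hball (by simpa using hy)
    rw [Real.dist_eq] at this
    linarith [(abs_lt.mp this).1]
  refine ⟨f 0 - 1, 2 / ρ, fun x => ?_⟩
  have hCx : 0 ≤ 2 / ρ * ‖x‖ := by positivity
  rcases lt_or_ge ‖x‖ ρ with hx | hx
  · linarith [hnear x hx]
  have hxpos : 0 < ‖x‖ := hρ.trans_le hx
  set t := ρ / (2 * ‖x‖) with ht
  have ht0 : 0 < t := by positivity
  have ht1 : t ≤ 1 := by rw [ht, div_le_one (by positivity)]; linarith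
  have hchord : f (t • x) ≤ (1 - t) * f 0 + t * f x := by
    simpa using hf.2 (mem_univ 0) (mem_univ x) (sub_nonneg.2 ht1) ht0.le (sub_add_cancel 1 t)
  have hsmall : ‖t • x‖ < ρ := by
    rw [norm_smul, Real.norm_of_nonneg ht0.le, ht]
    field_simp
    linarith
  have hslope : -1 ≤ t * (f x - f 0) := by linarith [hnear _ hsmall]
  have hinv : 1 / t * (t * (f x - f 0)) = f x - f 0 := by field_simp
  have hCt : 2 / ρ * ‖x‖ = 1 / t := by rw [ht]; field_simp
  have := mul_le_mul_of_nonneg_left hslope (one_div_pos.mpr ht0).le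
  linarith

theorem ConvexOn.exists_isMinOn_mul_norm_sub_sq_add [ProperSpace E] {f : E → ℝ}
    (hf : ConvexOn ℝ univ f) (hfc : Continuous f) {c : ℝ} (hc : 0 < c) (a : E) :
    ∃ p, IsMinOn (fun x => c * ‖x - a‖ ^ 2 + f x) univ p := by
  obtain ⟨A, C, hAC⟩ := hf.exists_sub_mul_norm_le hfc.continuousAt
  set B := A - c * ‖a‖ ^ 2 - C ^ 2 / (2 * c) with hB
  have hquad : Tendsto (fun r : ℝ => c / 2 * (r - C / c) ^ 2 + B) atTop atTop :=
    tendsto_atTop_add_const_right _ _ <| Tendsto.const_mul_atTop (by positivity) <|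
      (tendsto_pow_atTop two_ne_zero).comp (tendsto_atTop_add_const_right _ _ tendsto_id)
  have hlow : ∀ x, c / 2 * (‖x‖ - C / c) ^ 2 + B ≤ c * ‖x - a‖ ^ 2 + f x := fun x => by
    have htri : ‖x‖ ≤ ‖x - a‖ + ‖a‖ := norm_le_norm_sub_add x a
    have hsq : ‖x‖ ^ 2 ≤ 2 * ‖x - a‖ ^ 2 + 2 * ‖a‖ ^ 2 := by
      nlinarith [sq_nonneg (‖x - a‖ - ‖a‖), norm_nonneg x]
    have hexpand :
        c / 2 * (‖x‖ - C / c) ^ 2 + B = c / 2 * ‖x‖ ^ 2 - C * ‖x‖ + A - c * ‖a‖ ^ 2 := by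
      rw [hB]
      field_simp
      ring
    nlinarith [hAC x]
  have hcont : Continuous fun x => c * ‖x - a‖ ^ 2 + f x := by fun_prop
  obtain ⟨p, hp⟩ :=
    hcont.exists_forall_le (tendsto_atTop_mono hlow (hquad.comp tendsto_norm_cocompact_atTop))
  exact ⟨p, fun y _ => hp y⟩

end Coercivity

section Bregman

variable {E : Type*} [NormedAddCommGroup E] [InnerProductSpace ℝ E]

/-- The Bregman distance `D_Φ^v(x, y)` of `Φ` at `y` with respect to the (sub)gradient `v`. -/
def bregmanDiv (Φ : E → ℝ) (v x y : E) : ℝ := Φ x - Φ y - ⟪v, x - y⟫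

theorem bregmanDiv_add_bregmanDiv_sub_smul (Φ : E → ℝ) (v g x y : E) (τ : ℝ) :
    bregmanDiv Φ v x y + bregmanDiv Φ (v - τ • g) y x = -(τ * ⟪g, x - y⟫) := by
  simp only [bregmanDiv, inner_sub_left, inner_sub_right, real_inner_smul_left]
  ring

theorem mul_add_bregmanDiv_le_mul {Φ F : E → ℝ} {v g x y : E} {L τ : ℝ}
    (hsub : ∀ z, Φ y + ⟪v, z - y⟫ ≤ Φ z)
    (hsmooth : F x ≤ F y + ⟪g, x - y⟫ + L * bregmanDiv Φ v x y)
    (hτ : 0 ≤ τ) (hτL : τ * L ≤ 1) :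
    τ * F x + bregmanDiv Φ (v - τ • g) y x ≤ τ * F y := by
  have hD : 0 ≤ bregmanDiv Φ v x y := by
    unfold bregmanDiv
    linarith [hsub x]
  have hsum := bregmanDiv_add_bregmanDiv_sub_smul Φ v g x y τ
  nlinarith [mul_le_mul_of_nonneg_left hsmooth hτ, mul_nonneg (sub_nonneg.2 hτL) hD]

end Bregman

theorem linBreg_full_step_linear_decrease_general {d : ℕ}
    (J F : EuclideanSpace ℝ (Fin d) → ℝ)
    (gradF : EuclideanSpace ℝ (Fin d) → EuclideanSpace ℝ (Fin d))
    (δ L η Fstar : ℝ) (lamfun : ℝ → ℝ)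
    (hδ : 0 < δ) (hlamfun : ∀ t, 0 < t → 0 < lamfun t)
    (hconv : ConvexOn ℝ Set.univ J) :
    let Jδ : EuclideanSpace ℝ (Fin d) → ℝ := fun x => 1/(2*δ) * ‖x‖^2 + J x
    let Sub : EuclideanSpace ℝ (Fin d) → EuclideanSpace ℝ (Fin d) → Prop :=
      fun θ v => ∀ x, Jδ θ + ⟪v, x - θ⟫ ≤ Jδ x
    let ProxMin : EuclideanSpace ℝ (Fin d) → EuclideanSpace ℝ (Fin d) → Prop :=
      fun w p => IsMinOn (fun x => 1/(2*δ) * ‖x - δ • w‖^2 + J x) Set.univ p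
    -- `F` is `L`-smooth relative to `J_δ`:
    (∀ θ' θ v, Sub θ v →
        F θ' ≤ F θ + ⟪gradF θ, θ' - θ⟫ + L * (Jδ θ' - Jδ θ - ⟪v, θ' - θ⟫)) →
    -- scaling assumption:
    (∀ θ v, Sub θ v → ∀ τ, 0 < τ → ∀ θτ θ1, ProxMin (v - τ • gradF θ) θτ →
        ProxMin (v - gradF θ) θ1 →
        Jδ θ - Jδ θτ - ⟪v - τ • gradF θ, θ - θτ⟫ ≥
          lamfun τ * (Jδ θ - Jδ θ1 - ⟪v - gradF θ, θ - θ1⟫)) →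
    -- Bregman PL inequality:
    (∀ θ v, Sub θ v → ∀ θ1, ProxMin (v - gradF θ) θ1 →
        Jδ θ - Jδ θ1 - ⟪v - gradF θ, θ - θ1⟫ ≥ η * (F θ - Fstar)) →
    -- conclusion:
    ∀ θ v, Sub θ v → ∀ τ, 0 < τ → τ < 1/L → ∀ θτ, ProxMin (v - τ • gradF θ) θτ →
      F θτ - Fstar ≤ (1 - η * lamfun τ / τ) * (F θ - Fstar) := by
  intro Jδ Sub ProxMin hsmooth hscale hPL θ v hv τ hτ hτL θτ hθτ
  have hJ : Continuous J := continuousOn_univ.mp (hconv.continuousOn isOpen_univ)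
  obtain ⟨θ1, hθ1⟩ : ∃ θ1, ProxMin (v - gradF θ) θ1 :=
    hconv.exists_isMinOn_mul_norm_sub_sq_add hJ (by positivity) _
  have hτL' : τ * L ≤ 1 := ((lt_div_iff₀ (one_div_pos.mp (hτ.trans hτL))).mp hτL).le
  have hdescent := mul_add_bregmanDiv_le_mul hv (hsmooth θτ θ v hv) hτ.le hτL'
  have hgap : lamfun τ * (η * (F θ - Fstar)) ≤ bregmanDiv Jδ (v - τ • gradF θ) θ θτ :=
    (mul_le_mul_of_nonneg_left (hPL θ v hv θ1 hθ1) (hlamfun τ hτ).le).trans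
      (hscale θ v hv τ hτ θτ θ1 hθτ hθ1)
  have hrhs : (1 - η * lamfun τ / τ) * (F θ - Fstar) - (F θτ - Fstar)
      = (τ * F θ - lamfun τ * (η * (F θ - Fstar)) - τ * F θτ) / τ := by
    field_simp
    ring
  rw [← sub_nonneg, hrhs]
  exact div_nonneg (by linarith) hτ.le

/-- Lemma on full linearized Bregman steps: under relative `L`-smoothness
and the generalized PL condition, one linearized Bregman step with step size
`0 < τ < 1/L` satisfies `F(θ_τ⁺) - F* ≤ (1 - ηλ(τ)/τ)(F(θ) - F*)`. -/
theorem linBreg_full_step_linear_decrease {d : ℕ}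
    (J F : EuclideanSpace ℝ (Fin d) → ℝ)
    (gradF : EuclideanSpace ℝ (Fin d) → EuclideanSpace ℝ (Fin d))
    (δ L η Fstar : ℝ) (lamfun : ℝ → ℝ)
    (hδ : 0 < δ) (hL : 0 < L) (hη : 0 < η) (hlamfun : ∀ t, 0 < t → 0 < lamfun t)
    (hconv : ConvexOn ℝ Set.univ J) (hlsc : LowerSemicontinuous J)
    (hgrad : ∀ x, HasGradientAt F (gradF x) x)
    (hFstar : IsGLB (Set.range F) Fstar) :
    let Jδ : EuclideanSpace ℝ (Fin d) → ℝ := fun x => 1/(2*δ) * ‖x‖^2 + J x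
    let Sub : EuclideanSpace ℝ (Fin d) → EuclideanSpace ℝ (Fin d) → Prop :=
      fun θ v => ∀ x, Jδ θ + ⟪v, x - θ⟫ ≤ Jδ x
    let ProxMin : EuclideanSpace ℝ (Fin d) → EuclideanSpace ℝ (Fin d) → Prop :=
      fun w p => IsMinOn (fun x => 1/(2*δ) * ‖x - δ • w‖^2 + J x) Set.univ p
    -- `F` is `L`-smooth relative to `J_δ`:
    (∀ θ' θ v, Sub θ v →
        F θ' ≤ F θ + ⟪gradF θ, θ' - θ⟫ + L * (Jδ θ' - Jδ θ - ⟪v, θ' - θ⟫)) →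
    -- scaling assumption:
    (∀ θ v, Sub θ v → ∀ τ, 0 < τ → ∀ θτ θ1, ProxMin (v - τ • gradF θ) θτ →
        ProxMin (v - gradF θ) θ1 →
        Jδ θ - Jδ θτ - ⟪v - τ • gradF θ, θ - θτ⟫ ≥
          lamfun τ * (Jδ θ - Jδ θ1 - ⟪v - gradF θ, θ - θ1⟫)) →
    -- Bregman PL inequality:
    (∀ θ v, Sub θ v → ∀ θ1, ProxMin (v - gradF θ) θ1 →
        Jδ θ - Jδ θ1 - ⟪v - gradF θ, θ - θ1⟫ ≥ η * (F θ - Fstar)) →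
    -- conclusion:
    ∀ θ v, Sub θ v → ∀ τ, 0 < τ → τ < 1/L → ∀ θτ, ProxMin (v - τ • gradF θ) θτ →
      F θτ - Fstar ≤ (1 - η * lamfun τ / τ) * (F θ - Fstar) :=
  linBreg_full_step_linear_decrease_general J F gradF δ L η Fstar lamfun hδ hlamfun hconv
end

section
/- Let F(θ) = (1/n)Σ_{j=1}^n F_j(θ) where each ∇F_j is L-Lipschitz. Fix θ^(k), a restriction R with P = Rᵀ, ‖R‖ ≤ 1, ‖P‖ ≤ 1. For a uniformly random single index j (batch size b = 1), define the variance-reduced coarse gradient G_j(θ̂) := R∇F_j(θ̃) + R∇F(θ^(k)) − R∇F_j(θ^(k)) with θ̃ := θ^(k) + P(θ̂ − Rθ^(k)). Then E_j[G_j(θ̂)] = R∇F(θ̃) and E_j[‖G_j(θ̂) − R∇F(θ̃)‖²] ≤ L²‖θ̂ − Rθ^(k)‖². -/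
/-!
Write `X_j = ∇F_j(θ̃) - ∇F_j(θ^(k))`. The estimator minus `R∇F(θ̃)` is `R(X_j - X̄)`, so its mean
is exact, and since `R` is nonexpansive its variance is at most the second moment
`(1/n) Σ ‖X_j‖² ≤ L² ‖θ̃ - θ^(k)‖²`. Finally `θ̃ - θ^(k) = P(θ̂ - Rθ^(k))`, and `P` is an isometry
because it is the adjoint of `R` and `RP = id`.
-/

open RealInnerProductSpace Finset

namespace EuclideanSpace

variable {ι κ : Type*}

def funLeft (e : κ → ι) : EuclideanSpace ℝ ι →ₗ[ℝ] EuclideanSpace ℝ κ where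
  toFun x := WithLp.toLp 2 fun i => x (e i)
  map_add' _ _ := rfl
  map_smul' _ _ := rfl

@[simp]
theorem funLeft_apply (e : κ → ι) (x : EuclideanSpace ℝ ι) (i : κ) : funLeft e x i = x (e i) :=
  rfl

variable [Fintype κ] [DecidableEq ι]

def extendByZero (e : κ → ι) (x : EuclideanSpace ℝ κ) : EuclideanSpace ℝ ι :=
  WithLp.toLp 2 fun j => ∑ i, if e i = j then x i else 0

@[simp]
theorem extendByZero_apply (e : κ → ι) (x : EuclideanSpace ℝ κ) (j : ι) :
    extendByZero e x j = ∑ i, if e i = j then x i else 0 :=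
  rfl

theorem funLeft_extendByZero {e : κ → ι} (he : Function.Injective e) (x : EuclideanSpace ℝ κ) :
    funLeft e (extendByZero e x) = x := by
  ext i
  rw [funLeft_apply, extendByZero_apply,
    Fintype.sum_eq_single i fun _ hne => if_neg (he.ne hne), if_pos rfl]

variable [Fintype ι]

theorem inner_extendByZero (e : κ → ι) (x : EuclideanSpace ℝ κ) (z : EuclideanSpace ℝ ι) :
    ⟪extendByZero e x, z⟫ = ⟪x, funLeft e z⟫ := by
  simp only [inner_eq_star_dotProduct, dotProduct, star_trivial, extendByZero_apply,
    funLeft_apply, Finset.mul_sum, mul_ite, mul_zero]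
  rw [Finset.sum_comm]
  simp

theorem norm_extendByZero {e : κ → ι} (he : Function.Injective e) (x : EuclideanSpace ℝ κ) :
    ‖extendByZero e x‖ = ‖x‖ := by
  refine (sq_eq_sq₀ (norm_nonneg _) (norm_nonneg _)).1 ?_
  rw [← real_inner_self_eq_norm_sq, inner_extendByZero, funLeft_extendByZero he,
    real_inner_self_eq_norm_sq]

theorem norm_funLeft_le {e : κ → ι} (he : Function.Injective e) (z : EuclideanSpace ℝ ι) :
    ‖funLeft e z‖ ≤ ‖z‖ := by
  have h : ‖funLeft e z‖ ^ 2 ≤ ‖funLeft e z‖ * ‖z‖ :=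
    calc ‖funLeft e z‖ ^ 2 = ⟪extendByZero e (funLeft e z), z⟫ := by
          rw [inner_extendByZero, real_inner_self_eq_norm_sq]
      _ ≤ ‖funLeft e z‖ * ‖z‖ := by
          simpa only [norm_extendByZero he] using real_inner_le_norm (extendByZero e (funLeft e z)) z
  nlinarith [norm_nonneg (funLeft e z), norm_nonneg z]

end EuclideanSpace

variable {ι E F : Type*}

theorem sum_norm_sub_mean_sq_le [Fintype ι] [NormedAddCommGroup E] [InnerProductSpace ℝ E] (X : ι → E) :
    ∑ j, ‖X j - (Fintype.card ι : ℝ)⁻¹ • ∑ i, X i‖ ^ 2 ≤ ∑ j, ‖X j‖ ^ 2 := by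
  set n : ℝ := (Fintype.card ι : ℝ)
  set m := n⁻¹ • ∑ i, X i
  have hm : ∑ i, X i = n • m := by
    rcases isEmpty_or_nonempty ι with _ | _
    · simp [n]
    · rw [smul_inv_smul₀ (by positivity)]
  have hsum : ∑ j, ‖X j - m‖ ^ 2 = ∑ j, ‖X j‖ ^ 2 - n * ‖m‖ ^ 2 := by
    simp only [norm_sub_sq_real, Finset.sum_add_distrib, Finset.sum_sub_distrib, ← Finset.mul_sum,
      ← sum_inner, hm, real_inner_smul_left, real_inner_self_eq_norm_sq, Finset.sum_const,
      Finset.card_univ, nsmul_eq_mul]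
    ring
  rw [hsum]
  nlinarith [sq_nonneg ‖m‖, show 0 ≤ n by positivity]

section VarianceReduced

variable {n : ℕ}

section Module

variable [AddCommGroup E] [Module ℝ E] [AddCommGroup F] [Module ℝ F]

/-- `a j` and `b j` are the sample gradients at the current and at the anchor point. -/
noncomputable def varianceReduced (R : E →ₗ[ℝ] F) (a b : Fin n → E) (j : Fin n) : F :=
  R (a j) + R ((n : ℝ)⁻¹ • ∑ i, b i) - R (b j)

theorem mean_varianceReduced [NeZero n] (R : E →ₗ[ℝ] F) (a b : Fin n → E) :
    (n : ℝ)⁻¹ • ∑ j, varianceReduced R a b j = R ((n : ℝ)⁻¹ • ∑ j, a j) := by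
  have hn : (n : ℝ) ≠ 0 := NeZero.ne _
  simp only [varianceReduced, Finset.sum_sub_distrib, Finset.sum_add_distrib, Finset.sum_const,
    Finset.card_univ, Fintype.card_fin, ← Nat.cast_smul_eq_nsmul ℝ, ← map_sum, map_smul,
    smul_inv_smul₀ hn, add_sub_cancel_right]

theorem varianceReduced_sub_mean (R : E →ₗ[ℝ] F) (a b : Fin n → E) (j : Fin n) :
    varianceReduced R a b j - R ((n : ℝ)⁻¹ • ∑ i, a i) =
      R ((a j - b j) - (n : ℝ)⁻¹ • ∑ i, (a i - b i)) := by
  simp only [varianceReduced, Finset.sum_sub_distrib, smul_sub, map_sub]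
  abel

end Module

theorem sum_norm_varianceReduced_sub_mean_sq_le [NormedAddCommGroup E] [InnerProductSpace ℝ E]
    [NormedAddCommGroup F] [NormedSpace ℝ F] (R : E →ₗ[ℝ] F) (hR : ∀ v, ‖R v‖ ≤ ‖v‖)
    (a b : Fin n → E) :
    ∑ j, ‖varianceReduced R a b j - R ((n : ℝ)⁻¹ • ∑ i, a i)‖ ^ 2 ≤ ∑ j, ‖a j - b j‖ ^ 2 :=
  calc _ ≤ ∑ j, ‖(a j - b j) - (n : ℝ)⁻¹ • ∑ i, (a i - b i)‖ ^ 2 := by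
        gcongr with j
        rw [varianceReduced_sub_mean]
        exact hR _
    _ ≤ ∑ j, ‖a j - b j‖ ^ 2 := by
        simpa only [Fintype.card_fin] using sum_norm_sub_mean_sq_le fun j => a j - b j

end VarianceReduced

theorem variance_reduced_coarse_gradient_single_sample_general {d D n : ℕ} (hn : 0 < n)
    (L : ℝ)
    (gF : Fin n → EuclideanSpace ℝ (Fin d) → EuclideanSpace ℝ (Fin d))
    (hlip : ∀ j x y, ‖gF j x - gF j y‖ ≤ L * ‖x - y‖)
    (ι : Fin D → Fin d) (hι : Function.Injective ι)
    (θk : EuclideanSpace ℝ (Fin d)) (θc : EuclideanSpace ℝ (Fin D)) :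
    let Rop : EuclideanSpace ℝ (Fin d) → EuclideanSpace ℝ (Fin D) := fun x => WithLp.toLp 2 (fun i => x (ι i))
    let Pop : EuclideanSpace ℝ (Fin D) → EuclideanSpace ℝ (Fin d) :=
      fun x => WithLp.toLp 2 (fun j => ∑ i, if ι i = j then x i else 0)
    let gradF : EuclideanSpace ℝ (Fin d) → EuclideanSpace ℝ (Fin d) :=
      fun x => (n : ℝ)⁻¹ • ∑ j, gF j x
    let θt := θk + Pop (θc - Rop θk)
    let Gj : Fin n → EuclideanSpace ℝ (Fin D) :=
      fun j => Rop (gF j θt) + Rop (gradF θk) - Rop (gF j θk)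
    ((n : ℝ)⁻¹ • ∑ j, Gj j = Rop (gradF θt)) ∧
      (n : ℝ)⁻¹ * ∑ j, ‖Gj j - Rop (gradF θt)‖^2 ≤ L^2 * ‖θc - Rop θk‖^2 := by
  intro Rop Pop gradF θt Gj
  have : NeZero n := NeZero.of_pos hn
  have hmean := mean_varianceReduced (EuclideanSpace.funLeft ι) (gF · θt) (gF · θk)
  have hvar := sum_norm_varianceReduced_sub_mean_sq_le (EuclideanSpace.funLeft ι)
    (EuclideanSpace.norm_funLeft_le hι) (gF · θt) (gF · θk)
  have hstep : ‖θt - θk‖ = ‖θc - Rop θk‖ := by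
    rw [add_sub_cancel_left]
    exact EuclideanSpace.norm_extendByZero hι _
  refine ⟨hmean, ?_⟩
  calc (n : ℝ)⁻¹ * ∑ j, ‖Gj j - Rop (gradF θt)‖ ^ 2
      ≤ (n : ℝ)⁻¹ * ∑ j, ‖gF j θt - gF j θk‖ ^ 2 := mul_le_mul_of_nonneg_left hvar (by positivity)
    _ ≤ (n : ℝ)⁻¹ * ∑ _j : Fin n, (L * ‖θc - Rop θk‖) ^ 2 := by
        gcongr with j
        rw [← hstep]
        exact hlip j θt θk
    _ = L ^ 2 * ‖θc - Rop θk‖ ^ 2 := by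
        rw [Finset.sum_const, Finset.card_univ, Fintype.card_fin, nsmul_eq_mul]
        field_simp

/-- for `F = (1/n)Σ_j F_j` with `L`-Lipschitz gradients and batch size
`b = 1` (a uniformly random index `j`), the variance-reduced coarse gradient
`G_j(θ̂) := R∇F_j(θ̃) + R∇F(θ^(k)) - R∇F_j(θ^(k))` with `θ̃ := θ^(k) + P(θ̂ - Rθ^(k))` is
unbiased, `E_j[G_j(θ̂)] = R∇F(θ̃)`, with variance
`E_j[‖G_j(θ̂) - R∇F(θ̃)‖²] ≤ L²‖θ̂ - Rθ^(k)‖²`. -/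
theorem variance_reduced_coarse_gradient_single_sample {d D n : ℕ} (hn : 0 < n)
    (L : ℝ) (hL : 0 ≤ L)
    (F : Fin n → EuclideanSpace ℝ (Fin d) → ℝ)
    (gF : Fin n → EuclideanSpace ℝ (Fin d) → EuclideanSpace ℝ (Fin d))
    (hgrad : ∀ j x, HasGradientAt (F j) (gF j x) x)
    (hlip : ∀ j x y, ‖gF j x - gF j y‖ ≤ L * ‖x - y‖)
    (ι : Fin D → Fin d) (hι : Function.Injective ι)
    (θk : EuclideanSpace ℝ (Fin d)) (θc : EuclideanSpace ℝ (Fin D)) :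
    let Rop : EuclideanSpace ℝ (Fin d) → EuclideanSpace ℝ (Fin D) := fun x => WithLp.toLp 2 (fun i => x (ι i))
    let Pop : EuclideanSpace ℝ (Fin D) → EuclideanSpace ℝ (Fin d) :=
      fun x => WithLp.toLp 2 (fun j => ∑ i, if ι i = j then x i else 0)
    let gradF : EuclideanSpace ℝ (Fin d) → EuclideanSpace ℝ (Fin d) :=
      fun x => (n : ℝ)⁻¹ • ∑ j, gF j x
    let θt := θk + Pop (θc - Rop θk)
    let Gj : Fin n → EuclideanSpace ℝ (Fin D) :=
      fun j => Rop (gF j θt) + Rop (gradF θk) - Rop (gF j θk)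
    ((n : ℝ)⁻¹ • ∑ j, Gj j = Rop (gradF θt)) ∧
      (n : ℝ)⁻¹ * ∑ j, ‖Gj j - Rop (gradF θt)‖^2 ≤ L^2 * ‖θc - Rop θk‖^2 :=
  variance_reduced_coarse_gradient_single_sample_general hn L gF hlip ι hι θk θc
end

section
/- Let F be L-smooth relative to J_δ with J proper, convex, lsc, δ > 0, and suppose the stochastic gradient estimator g is unbiased with conditional variance at most σ². One stochastic linearized Bregman step v⁺ = v − τ̂ g, θ⁺ = prox_{δJ}(δ v⁺) with step size τ̂ ≤ 1/(4L) satisfies E[F(θ⁺)] ≤ F(θ) − (1/(4τ̂)) E[D^sym_{J_δ}(θ⁺, θ)] + (δσ²/2) τ̂. -/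
open RealInnerProductSpace MeasureTheory

section Helpers

variable {E : Type*} [NormedAddCommGroup E] [InnerProductSpace ℝ E]

private lemma young_ineq' (a b : E) {ε : ℝ} (hε : 0 < ε) :
    ⟪a, b⟫ ≤ ε/2 * ‖a‖^2 + 1/(2*ε) * ‖b‖^2 := by
  have h1 : ⟪a, b⟫ ≤ ‖a‖ * ‖b‖ := real_inner_le_norm a b
  have hc : (2*ε) * (1/(2*ε)) = 1 := by field_simp
  nlinarith [sq_nonneg (ε*‖a‖ - ‖b‖), mul_pos hε hε, norm_nonneg a, norm_nonneg b,
    mul_nonneg (le_of_lt (by positivity : (0:ℝ) < 1/(2*ε))) (sq_nonneg (ε*‖a‖ - ‖b‖))]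

private lemma comb_norm_sq' (u w : E) (t : ℝ) :
    ‖u + t • (w - u)‖^2 = (1-t)*‖u‖^2 + t*‖w‖^2 - t*(1-t)*‖w-u‖^2 := by
  have e1 : ‖u + t • (w - u)‖^2 = ‖u‖^2 + 2*(t*⟪u, w-u⟫) + ‖t • (w-u)‖^2 := by
    rw [norm_add_sq_real, real_inner_smul_right]
  have e2 : ‖t • (w-u)‖^2 = t^2 * ‖w-u‖^2 := by
    rw [norm_smul]; simp [mul_pow, sq_abs]
  have e3 : ‖w-u‖^2 = ‖w‖^2 - 2*⟪w,u⟫ + ‖u‖^2 := norm_sub_sq_real w u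
  have e4 : ⟪u, w-u⟫ = ⟪w,u⟫ - ‖u‖^2 := by
    rw [inner_sub_right, real_inner_self_eq_norm_sq, real_inner_comm]
  rw [e1, e2, e4, e3]; ring

/-- A minimizer of a `1/δ`-strongly convex objective satisfies the strong
minimization inequality. -/
private lemma prox_strong' (J : E → ℝ) (hconv : ConvexOn ℝ Set.univ J) {δ : ℝ} (hδ : 0 < δ)
    (a m : E) (hm : ∀ x, 1/(2*δ)*‖m-a‖^2 + J m ≤ 1/(2*δ)*‖x-a‖^2 + J x) (x : E) :
    1/(2*δ)*‖m-a‖^2 + J m + 1/(2*δ)*‖x-m‖^2 ≤ 1/(2*δ)*‖x-a‖^2 + J x := by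
  have hc0 : (0:ℝ) ≤ 1/(2*δ)*‖x-m‖^2 := by positivity
  refine le_of_forall_pos_le_add (fun ε hε => ?_)
  set c : ℝ := 1/(2*δ)*‖x-m‖^2 with hcdef
  set t : ℝ := min (1/2) (ε / (c+1)) with htdef
  have hc1 : 0 < c + 1 := by linarith
  have ht0 : 0 < t := lt_min (by norm_num) (div_pos hε hc1)
  have ht1 : t ≤ 1/2 := min_le_left _ _
  have htc : t * c ≤ ε := by
    have h1 : t ≤ ε / (c+1) := min_le_right _ _
    have h2 : t * c ≤ (ε / (c+1)) * (c+1) := by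
      have := mul_le_mul h1 (by linarith : c ≤ c + 1) (by linarith) (le_of_lt (div_pos hε hc1))
      linarith
    rwa [div_mul_cancel₀ _ (ne_of_gt hc1)] at h2
  have hmt := hm (m + t • (x - m))
  have hJ : J (m + t • (x - m)) ≤ (1-t)*J m + t*J x := by
    have hcomb : m + t • (x - m) = (1-t) • m + t • x := by
      rw [smul_sub, sub_smul, one_smul]; abel
    rw [hcomb]
    exact hconv.2 (Set.mem_univ m) (Set.mem_univ x) (by linarith) (le_of_lt ht0) (by ring)
  have hQ : ‖(m + t • (x - m)) - a‖^2
      = (1-t)*‖m-a‖^2 + t*‖x-a‖^2 - t*(1-t)*‖x-m‖^2 := by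
    have h1 : (m + t • (x - m)) - a = (m - a) + t • ((x-a) - (m-a)) := by
      rw [sub_sub_sub_cancel_right]; abel
    rw [h1, comb_norm_sq', sub_sub_sub_cancel_right]
  rw [hQ] at hmt
  have key : 1/(2*δ)*‖m-a‖^2 + J m + (1-t)*c ≤ 1/(2*δ)*‖x-a‖^2 + J x := by
    have hmul : t * (1/(2*δ)*‖m-a‖^2 + J m + (1-t)*c) ≤ t * (1/(2*δ)*‖x-a‖^2 + J x) := by
      simp only [hcdef]; nlinarith [hmt, hJ]
    exact le_of_mul_le_mul_left hmul ht0
  calc 1/(2*δ)*‖m-a‖^2 + J m + c ≤ 1/(2*δ)*‖x-a‖^2 + J x + t*c := by linarith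
    _ ≤ 1/(2*δ)*‖x-a‖^2 + J x + ε := by linarith

private lemma quad_expand' {δ : ℝ} (hδ : 0 < δ) (w z : E) :
    1/(2*δ)*‖z - δ • w‖^2 = 1/(2*δ)*‖z‖^2 - ⟪w, z⟫ + δ/2*‖w‖^2 := by
  have e1 : ‖z - δ • w‖^2 = ‖z‖^2 - 2*⟪z, δ • w⟫ + ‖δ • w‖^2 := norm_sub_sq_real z (δ • w)
  have e2 : ⟪z, δ • w⟫ = δ * ⟪w, z⟫ := by rw [real_inner_smul_right, real_inner_comm]
  have e3 : ‖δ • w‖^2 = δ^2 * ‖w‖^2 := by rw [norm_smul]; simp [mul_pow, sq_abs]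
  rw [e1, e2, e3]; field_simp

/-- From a minimizer of the prox objective: strong subgradient inequality for `J_δ`. -/
private lemma prox_subgrad' (J : E → ℝ) (hconv : ConvexOn ℝ Set.univ J) {δ : ℝ} (hδ : 0 < δ)
    (w m : E) (hm : ∀ x, 1/(2*δ)*‖m - δ • w‖^2 + J m ≤ 1/(2*δ)*‖x - δ • w‖^2 + J x) (x : E) :
    (1/(2*δ)*‖m‖^2 + J m) + ⟪w, x - m⟫ + 1/(2*δ)*‖x-m‖^2 ≤ 1/(2*δ)*‖x‖^2 + J x := by
  have h := prox_strong' J hconv hδ (δ • w) m hm x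
  rw [quad_expand' hδ, quad_expand' hδ] at h
  rw [inner_sub_right]
  linarith

/-- Conversely, the subgradient inequality gives the prox minimization property. -/
private lemma subgrad_prox' (J : E → ℝ) {δ : ℝ} (hδ : 0 < δ) (w m : E)
    (hm : ∀ x, (1/(2*δ)*‖m‖^2 + J m) + ⟪w, x - m⟫ ≤ 1/(2*δ)*‖x‖^2 + J x) (x : E) :
    1/(2*δ)*‖m - δ • w‖^2 + J m ≤ 1/(2*δ)*‖x - δ • w‖^2 + J x := by
  have h := hm x
  rw [inner_sub_right] at h
  rw [quad_expand' hδ, quad_expand' hδ]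
  linarith

/-- Pointwise descent inequality for one stochastic linearized Bregman step. -/
private lemma step_descent_pointwise (J F : E → ℝ) (hconv : ConvexOn ℝ Set.univ J)
    {δ L τh : ℝ} (hδ : 0 < δ) (hL : 0 < L) (hτh : 0 < τh) (hL4 : L ≤ 1/(4*τh))
    (θ v p gg GF : E)
    (hv : ∀ x, (1/(2*δ) * ‖θ‖^2 + J θ) + ⟪v, x - θ⟫ ≤ 1/(2*δ) * ‖x‖^2 + J x)
    (hsm : F p ≤ F θ + ⟪GF, p - θ⟫ +
      L * ((1/(2*δ) * ‖p‖^2 + J p) - (1/(2*δ) * ‖θ‖^2 + J θ) - ⟪v, p - θ⟫))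
    (hpmin : ∀ x, 1/(2*δ) * ‖p - δ • (v - τh • gg)‖^2 + J p
      ≤ 1/(2*δ) * ‖x - δ • (v - τh • gg)‖^2 + J x) :
    F p ≤ F θ - 1/(4*τh) * ⟪v - (v - τh • gg), θ - p⟫ + δ * τh / 2 * ‖gg - GF‖^2 := by
  have h1 := prox_subgrad' J hconv hδ v θ (subgrad_prox' J hδ v θ hv) p
  have h2 := prox_subgrad' J hconv hδ (v - τh • gg) p hpmin θ
  have hsub : v - (v - τh • gg) = τh • gg := by abel
  have hDA : ⟪v - (v - τh • gg), θ - p⟫ = τh * ⟪gg, θ - p⟫ := by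
    rw [hsub, real_inner_smul_left]
  rw [hDA]
  have hip2 : ⟪v - τh • gg, θ - p⟫ = ⟪v, θ - p⟫ - τh * ⟪gg, θ - p⟫ := by
    rw [inner_sub_left, real_inner_smul_left]
  have hvpθ : ⟪v, p - θ⟫ = -⟪v, θ - p⟫ := by
    have h : p - θ = -(θ - p) := by abel
    rw [h, inner_neg_right]
  have hggpθ : ⟪gg, p - θ⟫ = -⟪gg, θ - p⟫ := by
    have h : p - θ = -(θ - p) := by abel
    rw [h, inner_neg_right]
  have hnorm : ‖p - θ‖^2 = ‖θ - p‖^2 := by rw [norm_sub_rev]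
  rw [hip2] at h2
  rw [hvpθ, hnorm] at h1
  have hs0 : (0:ℝ) ≤ ‖θ - p‖^2 := by positivity
  have hc0 : (0:ℝ) < 1/(2*δ) := by positivity
  have hsum : 1/(2*δ)*‖θ - p‖^2 + 1/(2*δ)*‖θ - p‖^2 ≤ τh * ⟪gg, θ - p⟫ := by linarith
  have hA0 : (0:ℝ) ≤ ⟪gg, θ - p⟫ := by nlinarith [mul_nonneg hc0.le hs0]
  have hsA : ‖θ - p‖^2 ≤ δ * τh * ⟪gg, θ - p⟫ := by
    have h4 := mul_le_mul_of_nonneg_left hsum hδ.le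
    have h5 : δ * (1/(2*δ)*‖θ - p‖^2 + 1/(2*δ)*‖θ - p‖^2) = ‖θ - p‖^2 := by
      field_simp; ring
    rw [h5] at h4; linarith [h4]
  have hBD : (1/(2*δ)*‖p‖^2 + J p) - (1/(2*δ)*‖θ‖^2 + J θ) - ⟪v, p - θ⟫
      ≤ τh * ⟪gg, θ - p⟫ := by
    rw [hvpθ]; nlinarith [mul_nonneg hc0.le hs0]
  have hLB : L * ((1/(2*δ)*‖p‖^2 + J p) - (1/(2*δ)*‖θ‖^2 + J θ) - ⟪v, p - θ⟫)
      ≤ ⟪gg, θ - p⟫ / 4 := by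
    have ha := mul_le_mul_of_nonneg_left hBD hL.le
    have hb := mul_le_mul_of_nonneg_right hL4 (mul_nonneg hτh.le hA0)
    have hc : 1/(4*τh) * (τh * ⟪gg, θ - p⟫) = ⟪gg, θ - p⟫ / 4 := by
      field_simp
    linarith
  have hy := young_ineq' (GF - gg) (p - θ) (show (0:ℝ) < δ*τh by positivity)
  have hyn : ‖GF - gg‖ = ‖gg - GF‖ := norm_sub_rev _ _
  rw [hyn, hnorm] at hy
  have hys : 1/(2*(δ*τh)) * ‖θ - p‖^2 ≤ ⟪gg, θ - p⟫ / 2 := by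
    have ha := mul_le_mul_of_nonneg_left hsA (show (0:ℝ) ≤ 1/(2*(δ*τh)) by positivity)
    have hb : 1/(2*(δ*τh)) * (δ * τh * ⟪gg, θ - p⟫) = ⟪gg, θ - p⟫ / 2 := by
      field_simp
    linarith
  have hgsplit : ⟪GF, p - θ⟫ = ⟪gg, p - θ⟫ + ⟪GF - gg, p - θ⟫ := by
    rw [inner_sub_left]; ring
  have hfin : 1/(4*τh) * (τh * ⟪gg, θ - p⟫) = ⟪gg, θ - p⟫ / 4 := by field_simp
  rw [hfin]
  linarith [hsm, hgsplit, hggpθ, hy, hys, hLB]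

end Helpers

/-- stochastic coarse descent step: if `F` is `L`-smooth relative to
`J_δ` and the stochastic gradient `g` is unbiased with variance at most `σ²`, then one
stochastic linearized Bregman step `v⁺ = v - τ̂g`, `θ⁺ = prox_{δJ}(δv⁺)` with
`τ̂ ≤ 1/(4L)` satisfies
`E[F(θ⁺)] ≤ F(θ) - (1/(4τ̂)) E[D^sym_{J_δ}(θ⁺, θ)] + (δσ²/2)τ̂`. -/
theorem stochastic_linBreg_step_descent {d : ℕ} {Ω : Type*} [MeasurableSpace Ω]
    (μ : Measure Ω) [IsProbabilityMeasure μ]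
    (J F : EuclideanSpace ℝ (Fin d) → ℝ)
    (gradF : EuclideanSpace ℝ (Fin d) → EuclideanSpace ℝ (Fin d))
    (δ L σ τh : ℝ) (hδ : 0 < δ) (hL : 0 < L) (hσ : 0 ≤ σ)
    (hτh : 0 < τh) (hτhL : τh ≤ 1/(4*L))
    (hconv : ConvexOn ℝ Set.univ J) (hlsc : LowerSemicontinuous J)
    (hgrad : ∀ x, HasGradientAt F (gradF x) x)
    -- relative `L`-smoothness of `F` with respect to `J_δ`:
    (hsmooth : ∀ θ' θ v : EuclideanSpace ℝ (Fin d),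
      (∀ x, (1/(2*δ) * ‖θ‖^2 + J θ) + ⟪v, x - θ⟫ ≤ 1/(2*δ) * ‖x‖^2 + J x) →
      F θ' ≤ F θ + ⟪gradF θ, θ' - θ⟫ +
        L * ((1/(2*δ) * ‖θ'‖^2 + J θ') - (1/(2*δ) * ‖θ‖^2 + J θ) - ⟪v, θ' - θ⟫))
    (θ v : EuclideanSpace ℝ (Fin d))
    (hv : ∀ x, (1/(2*δ) * ‖θ‖^2 + J θ) + ⟪v, x - θ⟫ ≤ 1/(2*δ) * ‖x‖^2 + J x)
    -- unbiased stochastic gradient with bounded variance: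
    (g : Ω → EuclideanSpace ℝ (Fin d)) (hgint : Integrable g μ)
    (hgmean : ∫ ω, g ω ∂μ = gradF θ)
    (hgvar : ∫ ω, ‖g ω - gradF θ‖^2 ∂μ ≤ σ^2)
    (hgvarint : Integrable (fun ω => ‖g ω - gradF θ‖^2) μ)
    -- the stochastic linearized Bregman step `θ⁺(ω) = prox_{δJ}(δ(v - τ̂ g(ω)))`:
    (θp : Ω → EuclideanSpace ℝ (Fin d))
    (hθp : ∀ ω, IsMinOn (fun x => 1/(2*δ) * ‖x - δ • (v - τh • g ω)‖^2 + J x)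
      Set.univ (θp ω))
    (hFint : Integrable (fun ω => F (θp ω)) μ)
    (hDint : Integrable (fun ω => ⟪v - (v - τh • g ω), θ - θp ω⟫) μ) :
    ∫ ω, F (θp ω) ∂μ ≤
      F θ - 1/(4*τh) * ∫ ω, ⟪v - (v - τh • g ω), θ - θp ω⟫ ∂μ + δ * σ^2 / 2 * τh := by
  have hL4 : L ≤ 1/(4*τh) := by
    rw [le_div_iff₀ (by positivity : (0:ℝ) < 4*τh)]
    have h4L : (0:ℝ) < 4*L := by positivity
    have := (le_div_iff₀ h4L).mp hτhL
    nlinarith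
  have hpt : ∀ ω, F (θp ω) ≤ F θ - 1/(4*τh) * ⟪v - (v - τh • g ω), θ - θp ω⟫
      + δ * τh / 2 * ‖g ω - gradF θ‖^2 := fun ω =>
    step_descent_pointwise J F hconv hδ hL hτh hL4 θ v (θp ω) (g ω) (gradF θ) hv
      (hsmooth (θp ω) θ v hv)
      (fun x => isMinOn_iff.mp (hθp ω) x (Set.mem_univ x))
  have hIrhs : Integrable (fun ω => F θ - 1/(4*τh) * ⟪v - (v - τh • g ω), θ - θp ω⟫
      + δ * τh / 2 * ‖g ω - gradF θ‖^2) μ :=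
    ((integrable_const (F θ)).sub (hDint.const_mul (1/(4*τh)))).add
      (hgvarint.const_mul (δ * τh / 2))
  calc ∫ ω, F (θp ω) ∂μ
      ≤ ∫ ω, (F θ - 1/(4*τh) * ⟪v - (v - τh • g ω), θ - θp ω⟫
          + δ * τh / 2 * ‖g ω - gradF θ‖^2) ∂μ := integral_mono hFint hIrhs hpt
    _ = F θ - 1/(4*τh) * (∫ ω, ⟪v - (v - τh • g ω), θ - θp ω⟫ ∂μ)
          + δ * τh / 2 * (∫ ω, ‖g ω - gradF θ‖^2 ∂μ) := by
        have hint3 : Integrable (fun _ : Ω => F θ) μ := integrable_const _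
        have hint4 : Integrable (fun ω => 1/(4*τh) * ⟪v - (v - τh • g ω), θ - θp ω⟫) μ :=
          hDint.const_mul _
        have hint1 : Integrable
            (fun ω => F θ - 1/(4*τh) * ⟪v - (v - τh • g ω), θ - θp ω⟫) μ := hint3.sub hint4
        have hint2 : Integrable (fun ω => δ * τh / 2 * ‖g ω - gradF θ‖^2) μ :=
          hgvarint.const_mul _
        rw [integral_add hint1 hint2, integral_sub hint3 hint4,
          integral_const_mul, integral_const_mul, integral_const]
        simp [measure_univ]
    _ ≤ F θ - 1/(4*τh) * (∫ ω, ⟪v - (v - τh • g ω), θ - θp ω⟫ ∂μ) + δ * σ^2 / 2 * τh := by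
        have h1 : δ * τh / 2 * (∫ ω, ‖g ω - gradF θ‖^2 ∂μ) ≤ δ * τh / 2 * σ^2 :=
          mul_le_mul_of_nonneg_left hgvar (by positivity)
        have h2 : δ * τh / 2 * σ^2 = δ * σ^2 / 2 * τh := by ring
        linarith
end
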